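/- Let T be a tournament and R = {a,b,c} a 3-element subset of its vertices. Then R is a minimal τ-retentive set of T if and only if (1) a, b, c form a directed triangle (each dominates exactly one of the other two), and (2) no vertex of T dominates two vertices of R. -/

import Mathlib

variable {V : Type}

/-- Inneighbors of `v` inside the subtournament on `s` (excluding `v` itself). -/
def inn [DecidableEq V] (r : V → V → Prop) [DecidableRel r] (s : Finset V) (v : V) :
    Finset V :=
  (s.filter fun u => r u v).erase v

lemma inn_card_lt [DecidableEq V] (r : V → V → Prop) [DecidableRel r]
    (s : Finset V) (v : V) (hv : v ∈ s) : (inn r s v).card < s.card := by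
  have h1 : inn r s v ⊆ s.erase v := by
    intro x hx
    rcases Finset.mem_erase.mp hx with ⟨hxv, hx2⟩
    exact Finset.mem_erase.mpr ⟨hxv, (Finset.mem_filter.mp hx2).1⟩
  calc (inn r s v).card ≤ (s.erase v).card := Finset.card_le_card h1
    _ < s.card := Finset.card_erase_lt_of_mem hv

/-- The tournament equilibrium set of the subtournament of `r` on `s`:
the union of all minimal τ-retentive sets. -/
def tau [DecidableEq V] (r : V → V → Prop) [DecidableRel r] (s : Finset V) : Set V :=
  {x | ∃ A : Finset V, x ∈ A ∧ A ⊆ s ∧ A.Nonempty ∧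
    (∀ v, v ∈ s → v ∈ A → ((inn r s v).Nonempty → tau r (inn r s v) ⊆ ↑A)) ∧
    ∀ B : Finset V, B ⊆ s → B ⊂ A →
      ¬ (B.Nonempty ∧
        ∀ v, v ∈ s → v ∈ B → ((inn r s v).Nonempty → tau r (inn r s v) ⊆ ↑B))}
termination_by s.card
decreasing_by
  all_goals exact inn_card_lt r s v (by assumption)

/-- `A` is a τ-retentive set of the tournament on `s`. -/
def Retentive [DecidableEq V] (r : V → V → Prop) [DecidableRel r] (s A : Finset V) : Prop :=
  A ⊆ s ∧ A.Nonempty ∧ ∀ v ∈ A, (inn r s v).Nonempty → tau r (inn r s v) ⊆ ↑A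

/-- `A` is a minimal τ-retentive set of the tournament on `s`. -/
def MinRetentive [DecidableEq V] (r : V → V → Prop) [DecidableRel r] (s A : Finset V) : Prop :=
  Retentive r s A ∧ ∀ B, Retentive r s B → B ⊆ A → B = A

/-- `r` is a tournament on the vertex set `s`. -/
def IsTournament (r : V → V → Prop) (s : Finset V) : Prop :=
  (∀ v ∈ s, ¬ r v v) ∧ ∀ u ∈ s, ∀ v ∈ s, u ≠ v → (r u v ↔ ¬ r v u)

/-- `u` is the captain of `v` in the subtournament on `s`:
`u` dominates `v` and all other inneighbors of `v`. -/
def IsCaptain (r : V → V → Prop) (s : Finset V) (u v : V) : Prop :=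
  u ∈ s ∧ v ∈ s ∧ r u v ∧ ∀ w ∈ s, w ≠ u → r w v → r u w

/-- The (undirected) domination graph of the subtournament on `s`. -/
def domGraph (r : V → V → Prop) (s : Finset V) : SimpleGraph V where
  Adj u v := (IsCaptain r s u v ∨ IsCaptain r s v u) ∧ u ≠ v
  symm := by
    constructor
    intro u v h
    exact ⟨h.1.symm, h.2.symm⟩
  loopless := by
    constructor
    intro u h
    exact h.2 rfl

/-!
If `a → b → c → a`, the only inneighbor of `b` inside `R = {a, b, c}` is `a`, so `R` is
retentive exactly when `τ` of the inneighbors of `b` is contained in `{a}`, and cyclically.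
A one-point `τ` forces a Condorcet winner, so this says that `a` dominates every other
inneighbor of `b`, i.e. that no vertex dominates both `a` and `b`. Minimality is then
automatic: a retentive subset containing a vertex contains its predecessor on the cycle.
Conversely, a minimal retentive `R` with three elements contains no retentive singleton,
so every vertex of `R` has an inneighbor in `R`, which in a tournament forces a 3-cycle.
-/

section Retention

variable [DecidableEq V] {r : V → V → Prop} [DecidableRel r] {s A : Finset V} {u v x : V}

theorem mem_inn : u ∈ inn r s v ↔ u ≠ v ∧ u ∈ s ∧ r u v := by
  simp [inn]

theorem inn_subset : inn r s v ⊆ s := fun _ hu => (mem_inn.1 hu).2.1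

theorem inn_ssubset (hv : v ∈ s) : inn r s v ⊂ s :=
  (Finset.ssubset_iff_of_subset inn_subset).2 ⟨v, hv, fun h => (mem_inn.1 h).1 rfl⟩

theorem mem_tau_iff : x ∈ tau r s ↔ ∃ A, MinRetentive r s A ∧ x ∈ A := by
  rw [tau]
  constructor
  · rintro ⟨A, hxA, hAs, hAne, hret, hmin⟩
    refine ⟨A, ⟨⟨hAs, hAne, fun v hv => hret v (hAs hv) hv⟩, fun B hB hBA => ?_⟩, hxA⟩
    by_contra hne
    exact hmin B hB.1 (hBA.ssubset_of_ne hne) ⟨hB.2.1, fun v _ hv => hB.2.2 v hv⟩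
  · rintro ⟨A, ⟨⟨hAs, hAne, hret⟩, hmin⟩, hxA⟩
    exact ⟨A, hxA, hAs, hAne, fun v _ hv => hret v hv, fun B hBs hBA hB =>
      hBA.ne (hmin B ⟨hBs, hB.1, fun v hv => hB.2 v (hBs hv) hv⟩ hBA.subset)⟩

theorem MinRetentive.coe_subset_tau (hA : MinRetentive r s A) : ↑A ⊆ tau r s :=
  fun _ hx => mem_tau_iff.2 ⟨A, hA, hx⟩

theorem tau_subset : tau r s ⊆ s := by
  intro x hx
  obtain ⟨A, hA, hxA⟩ := mem_tau_iff.1 hx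
  exact hA.1.1 hxA

theorem retentive_self (r : V → V → Prop) [DecidableRel r] (hs : s.Nonempty) :
    Retentive r s s :=
  ⟨subset_rfl, hs, fun _ _ _ => tau_subset.trans (Finset.coe_subset.2 inn_subset)⟩

theorem retentive_singleton (hv : v ∈ s) (h : inn r s v = ∅) : Retentive r s {v} := by
  refine ⟨Finset.singleton_subset_iff.2 hv, Finset.singleton_nonempty v, ?_⟩
  rintro u hu ⟨w, hw⟩
  rw [Finset.mem_singleton.1 hu, h] at hw
  simp at hw

theorem Retentive.exists_minRetentive_subset (hA : Retentive r s A) :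
    ∃ B ⊆ A, MinRetentive r s B := by
  obtain ⟨B, ⟨hB, hBA⟩, hmin⟩ :=
    wellFounded_lt.has_min {B : Finset V | Retentive r s B ∧ B ⊆ A} ⟨A, hA, subset_rfl⟩
  exact ⟨B, hBA, hB, fun C hC hCB =>
    of_not_not fun hne => hmin C ⟨hC, hCB.trans hBA⟩ (hCB.ssubset_of_ne hne)⟩

theorem tau_nonempty (r : V → V → Prop) [DecidableRel r] (hs : s.Nonempty) :
    (tau r s).Nonempty := by
  obtain ⟨B, -, hB⟩ := (retentive_self r hs).exists_minRetentive_subset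
  obtain ⟨x, hx⟩ := hB.1.2.1
  exact ⟨x, hB.coe_subset_tau hx⟩

theorem Retentive.mem_of_tau_inn_subset_singleton (hA : Retentive r s A) (hv : v ∈ A)
    (hu : u ∈ inn r s v) (h : tau r (inn r s v) ⊆ {u}) : u ∈ A := by
  obtain ⟨x, hx⟩ := tau_nonempty r ⟨u, hu⟩
  rw [← h hx]
  exact hA.2.2 v hv ⟨u, hu⟩ hx

theorem Retentive.tau_inn_subset_singleton (hA : Retentive r s A) (hv : v ∈ A)
    (huniq : ∀ z ∈ A, r z v → z = u) : tau r (inn r s v) ⊆ {u} := by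
  intro x hx
  have hx_inn := tau_subset hx
  have hxA := hA.2.2 v hv ⟨x, hx_inn⟩ hx
  exact huniq x hxA (mem_inn.1 hx_inn).2.2

theorem inn_eq_empty_of_tau_subset_singleton (hs : s.Nonempty) (h : tau r s ⊆ {x}) :
    inn r s x = ∅ := by
  obtain ⟨y, hy⟩ := tau_nonempty r hs
  obtain ⟨A, hA, hyA⟩ := mem_tau_iff.1 hy
  have hA_sub : ∀ z ∈ A, z = x := fun z hz => h (hA.coe_subset_tau hz)
  rw [hA_sub y hyA] at hyA
  rw [← Finset.not_nonempty_iff_eq_empty]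
  intro hne
  obtain ⟨z, hz⟩ := tau_nonempty r hne
  exact (mem_inn.1 (tau_subset hz)).1 (hA_sub z (hA.1.2.2 x hyA hne hz))

end Retention

def IsCondorcetWinner (r : V → V → Prop) (s : Finset V) (a : V) : Prop :=
  a ∈ s ∧ ∀ w ∈ s, w ≠ a → r a w ∧ ¬ r w a

section Condorcet

variable [DecidableEq V] {r : V → V → Prop} [DecidableRel r] {s : Finset V} {a x : V}

theorem IsCondorcetWinner.inn_eq_empty (h : IsCondorcetWinner r s a) : inn r s a = ∅ :=
  Finset.eq_empty_of_forall_notMem fun w hw =>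
    let ⟨hwa, hws, hwr⟩ := mem_inn.1 hw
    (h.2 w hws hwa).2 hwr

theorem IsCondorcetWinner.of_mem_inn (h : IsCondorcetWinner r s a) (ha : a ∈ inn r s x) :
    IsCondorcetWinner r (inn r s x) a :=
  ⟨ha, fun w hw => h.2 w (inn_subset hw)⟩

theorem IsCondorcetWinner.tau_subset_singleton (h : IsCondorcetWinner r s a) :
    tau r s ⊆ {a} := by
  induction s using Finset.strongInduction with
  | _ s ih =>
  intro x hx
  obtain ⟨A, hA, hxA⟩ := mem_tau_iff.1 hx
  -- `a` is also the Condorcet winner among the inneighbors of any other vertex of `A`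
  have haA : a ∈ A := by
    by_cases hxa : x = a
    · exact hxa ▸ hxA
    have ha_inn : a ∈ inn r s x :=
      mem_inn.2 ⟨Ne.symm hxa, h.1, (h.2 x (hA.1.1 hxA) hxa).1⟩
    exact hA.1.mem_of_tau_inn_subset_singleton hxA ha_inn
      (ih _ (inn_ssubset (hA.1.1 hxA)) (h.of_mem_inn ha_inn))
  have hA_eq : {a} = A :=
    hA.2 {a} (retentive_singleton h.1 h.inn_eq_empty) (Finset.singleton_subset_iff.2 haA)
  rw [← hA_eq] at hxA
  exact Finset.mem_singleton.1 hxA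

end Condorcet

namespace IsTournament

variable {r : V → V → Prop} {s : Finset V} {u v : V}

theorem irrefl (hT : IsTournament r s) (hv : v ∈ s) : ¬ r v v := hT.1 v hv

theorem ne_of_rel (hT : IsTournament r s) (hu : u ∈ s) (h : r u v) : u ≠ v :=
  fun huv => hT.irrefl hu (huv ▸ h)

theorem asymm (hT : IsTournament r s) (hu : u ∈ s) (hv : v ∈ s) (h : r u v) :
    ¬ r v u :=
  (hT.2 u hu v hv (hT.ne_of_rel hu h)).1 h

theorem rel_of_not_rel (hT : IsTournament r s) (hu : u ∈ s) (hv : v ∈ s)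
    (huv : u ≠ v) (h : ¬ r v u) : r u v :=
  (hT.2 u hu v hv huv).2 h

end IsTournament

section Tournament

variable [DecidableEq V] {r : V → V → Prop} [DecidableRel r] {s R : Finset V} {u v : V}

theorem tau_inn_subset_singleton_iff (hT : IsTournament r s) (hu : u ∈ inn r s v) :
    tau r (inn r s v) ⊆ {u} ↔ ∀ w ∈ s, ¬ (r w u ∧ r w v) := by
  obtain ⟨-, hus, -⟩ := mem_inn.1 hu
  constructor
  · rintro h w hws ⟨hwu, hwv⟩
    have hw : w ∈ inn r s v := mem_inn.2 ⟨hT.ne_of_rel hws hwv, hws, hwv⟩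
    have hw' : w ∈ inn r (inn r s v) u := mem_inn.2 ⟨hT.ne_of_rel hws hwu, hw, hwu⟩
    rw [inn_eq_empty_of_tau_subset_singleton ⟨u, hu⟩ h] at hw'
    simp at hw'
  · intro h
    refine IsCondorcetWinner.tau_subset_singleton ⟨hu, fun w hw hwu => ?_⟩
    obtain ⟨-, hws, hwv⟩ := mem_inn.1 hw
    have hwu' : ¬ r w u := fun hwu' => h w hws ⟨hwu', hwv⟩
    exact ⟨hT.rel_of_not_rel hus hws (Ne.symm hwu) hwu', hwu'⟩

theorem MinRetentive.exists_rel_of_ne_singleton (hR : MinRetentive r s R) (hv : v ∈ R)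
    (hne : R ≠ {v}) : ∃ u ∈ R, r u v := by
  have hvs := hR.1.1 hv
  by_cases hinn : (inn r s v).Nonempty
  · obtain ⟨u, hu⟩ := tau_nonempty r hinn
    exact ⟨u, hR.1.2.2 v hv hinn hu, (mem_inn.1 (tau_subset hu)).2.2⟩
  · exact absurd (hR.2 {v} (retentive_singleton hvs (Finset.not_nonempty_iff_eq_empty.1 hinn))
      (Finset.singleton_subset_iff.2 hv)).symm hne

end Tournament

theorem forall_ne_mem_triple_iff [DecidableEq V] {p : V → V → Prop}
    (hp : ∀ x y, p x y → p y x) {a b c : V} (hab : a ≠ b) (hac : a ≠ c) (hbc : b ≠ c) :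
    (∀ x ∈ ({a, b, c} : Finset V), ∀ y ∈ ({a, b, c} : Finset V), x ≠ y → p x y) ↔
      p a b ∧ p b c ∧ p c a := by
  simp only [Finset.mem_insert, Finset.mem_singleton, forall_eq_or_imp, forall_eq]
  constructor
  · rintro ⟨⟨-, hab', -⟩, ⟨-, -, hbc'⟩, ⟨hca', -, -⟩⟩
    exact ⟨hab' hab, hbc' hbc, hca' (Ne.symm hac)⟩
  · rintro ⟨hab', hbc', hca'⟩
    exact ⟨⟨absurd rfl, fun _ => hab', fun _ => hp _ _ hca'⟩,
      ⟨fun _ => hp _ _ hab', absurd rfl, fun _ => hbc'⟩,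
      ⟨fun _ => hca', fun _ => hp _ _ hbc', absurd rfl⟩⟩

section Triangle

variable [DecidableEq V] {r : V → V → Prop} [DecidableRel r] {s : Finset V} {a b c : V}

theorem rel_cycle_of_minRetentive (hT : IsTournament r s) (hab : a ≠ b)
    (h : MinRetentive r s {a, b, c}) :
    (r a b ∧ r b c ∧ r c a) ∨ (r a c ∧ r c b ∧ r b a) := by
  have ha : a ∈ s := h.1.1 (by simp)
  have hb : b ∈ s := h.1.1 (by simp)
  have hc : c ∈ s := h.1.1 (by simp)
  have hpred : ∀ v ∈ ({a, b, c} : Finset V), ∃ u ∈ ({a, b, c} : Finset V), r u v := by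
    refine fun v hv => h.exists_rel_of_ne_singleton hv fun hR => ?_
    have hav : a = v := Finset.mem_singleton.1 (hR ▸ by simp)
    have hbv : b = v := Finset.mem_singleton.1 (hR ▸ by simp)
    exact hab (hav.trans hbv.symm)
  simp only [Finset.mem_insert, Finset.mem_singleton, forall_eq_or_imp, forall_eq,
    exists_eq_or_imp] at hpred
  grind [hT.irrefl ha, hT.irrefl hb, hT.irrefl hc, hT.asymm ha hb, hT.asymm hb hc,
    hT.asymm hc ha]

theorem minRetentive_iff_tau_inn_subset_of_rel_cycle (hT : IsTournament r s) (ha : a ∈ s)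
    (hb : b ∈ s) (hc : c ∈ s) (hab : r a b) (hbc : r b c) (hca : r c a) :
    MinRetentive r s {a, b, c} ↔
      tau r (inn r s b) ⊆ {a} ∧ tau r (inn r s c) ⊆ {b} ∧ tau r (inn r s a) ⊆ {c} := by
  have ma : a ∈ inn r s b := mem_inn.2 ⟨hT.ne_of_rel ha hab, ha, hab⟩
  have mb : b ∈ inn r s c := mem_inn.2 ⟨hT.ne_of_rel hb hbc, hb, hbc⟩
  have mc : c ∈ inn r s a := mem_inn.2 ⟨hT.ne_of_rel hc hca, hc, hca⟩
  constructor
  · intro h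
    refine ⟨h.1.tau_inn_subset_singleton (by simp) ?_, h.1.tau_inn_subset_singleton (by simp) ?_,
      h.1.tau_inn_subset_singleton (by simp) ?_⟩ <;>
      simp only [Finset.mem_insert, Finset.mem_singleton, forall_eq_or_imp, forall_eq]
    · exact ⟨fun _ => trivial, (absurd · (hT.irrefl hb)), (absurd · (hT.asymm hb hc hbc))⟩
    · exact ⟨(absurd · (hT.asymm hc ha hca)), fun _ => trivial, (absurd · (hT.irrefl hc))⟩
    · exact ⟨(absurd · (hT.irrefl ha)), (absurd · (hT.asymm ha hb hab)), fun _ => trivial⟩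
  · rintro ⟨hb', hc', ha'⟩
    have hR : Retentive r s {a, b, c} := by
      refine ⟨by simp [Finset.insert_subset_iff, ha, hb, hc], by simp, fun v hv _ => ?_⟩
      simp only [Finset.mem_insert, Finset.mem_singleton] at hv
      rcases hv with rfl | rfl | rfl
      · exact ha'.trans (by simp)
      · exact hb'.trans (by simp)
      · exact hc'.trans (by simp)
    refine ⟨hR, fun B hB hBR => ?_⟩
    have hcB : a ∈ B → c ∈ B := fun h => hB.mem_of_tau_inn_subset_singleton h mc ha'
    have haB : b ∈ B → a ∈ B := fun h => hB.mem_of_tau_inn_subset_singleton h ma hb'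
    have hbB : c ∈ B → b ∈ B := fun h => hB.mem_of_tau_inn_subset_singleton h mb hc'
    obtain ⟨v, hv⟩ := hB.2.1
    have hall : a ∈ B ∧ b ∈ B ∧ c ∈ B := by
      have hvR := hBR hv
      simp only [Finset.mem_insert, Finset.mem_singleton] at hvR
      rcases hvR with rfl | rfl | rfl
      · exact ⟨hv, hbB (hcB hv), hcB hv⟩
      · exact ⟨haB hv, hv, hcB (haB hv)⟩
      · exact ⟨haB (hbB hv), hbB hv, hv⟩
    exact hBR.antisymm (by simp [Finset.insert_subset_iff, hall])

theorem minRetentive_iff_of_rel_cycle (hT : IsTournament r s) (ha : a ∈ s) (hb : b ∈ s)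
    (hc : c ∈ s) (hab : r a b) (hbc : r b c) (hca : r c a) :
    MinRetentive r s {a, b, c} ↔
      ∀ w ∈ s, ∀ x ∈ ({a, b, c} : Finset V), ∀ y ∈ ({a, b, c} : Finset V),
        x ≠ y → ¬ (r w x ∧ r w y) := by
  rw [minRetentive_iff_tau_inn_subset_of_rel_cycle hT ha hb hc hab hbc hca,
    tau_inn_subset_singleton_iff hT (mem_inn.2 ⟨hT.ne_of_rel ha hab, ha, hab⟩),
    tau_inn_subset_singleton_iff hT (mem_inn.2 ⟨hT.ne_of_rel hb hbc, hb, hbc⟩),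
    tau_inn_subset_singleton_iff hT (mem_inn.2 ⟨hT.ne_of_rel hc hca, hc, hca⟩)]
  have hpairs : ∀ w, (∀ x ∈ ({a, b, c} : Finset V), ∀ y ∈ ({a, b, c} : Finset V),
      x ≠ y → ¬ (r w x ∧ r w y)) ↔ ¬ (r w a ∧ r w b) ∧ ¬ (r w b ∧ r w c) ∧ ¬ (r w c ∧ r w a) :=
    fun w => forall_ne_mem_triple_iff (fun _ _ h hyx => h hyx.symm) (hT.ne_of_rel ha hab)
      (hT.ne_of_rel hc hca).symm (hT.ne_of_rel hb hbc)
  simp only [hpairs, imp_and, forall_and]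

end Triangle

theorem stmt8_general [DecidableEq V] (r : V → V → Prop) [DecidableRel r] (s : Finset V)
    (hT : IsTournament r s) (a b c : V) (ha : a ∈ s) (hb : b ∈ s) (hc : c ∈ s)
    (hab : a ≠ b) :
    MinRetentive r s {a, b, c} ↔
      (((r a b ∧ r b c ∧ r c a) ∨ (r a c ∧ r c b ∧ r b a)) ∧
        ∀ w ∈ s, ∀ x ∈ ({a, b, c} : Finset V), ∀ y ∈ ({a, b, c} : Finset V),
          x ≠ y → ¬ (r w x ∧ r w y)) := by
  have key : (r a b ∧ r b c ∧ r c a) ∨ (r a c ∧ r c b ∧ r b a) →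
      (MinRetentive r s {a, b, c} ↔ ∀ w ∈ s, ∀ x ∈ ({a, b, c} : Finset V),
        ∀ y ∈ ({a, b, c} : Finset V), x ≠ y → ¬ (r w x ∧ r w y)) := by
    rintro (⟨h₁, h₂, h₃⟩ | ⟨h₁, h₂, h₃⟩)
    · exact minRetentive_iff_of_rel_cycle hT ha hb hc h₁ h₂ h₃
    · rw [Finset.pair_comm b c]
      exact minRetentive_iff_of_rel_cycle hT ha hc hb h₁ h₂ h₃
  constructor
  · intro h
    have hcycle := rel_cycle_of_minRetentive hT hab h
    exact ⟨hcycle, (key hcycle).1 h⟩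
  · rintro ⟨hcycle, hnd⟩
    exact (key hcycle).2 hnd

theorem stmt8 [DecidableEq V] (r : V → V → Prop) [DecidableRel r] (s : Finset V)
    (hT : IsTournament r s) (a b c : V) (ha : a ∈ s) (hb : b ∈ s) (hc : c ∈ s)
    (hab : a ≠ b) (hac : a ≠ c) (hbc : b ≠ c) :
    MinRetentive r s {a, b, c} ↔
      (((r a b ∧ r b c ∧ r c a) ∨ (r a c ∧ r c b ∧ r b a)) ∧
        ∀ w ∈ s, ∀ x ∈ ({a, b, c} : Finset V), ∀ y ∈ ({a, b, c} : Finset V),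
          x ≠ y → ¬ (r w x ∧ r w y)) :=
  stmt8_general r s hT a b c ha hb hc hab
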